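/- Let ℓ ≥ 2 and let C_{2ℓ} be the circular graph on vertex set {1,2,…,2ℓ} with edges {i,i+1} for 1 ≤ i ≤ 2ℓ, indices taken modulo 2ℓ (so {2ℓ,1} is an edge). Then there exists a polynomial H(x) with rational coefficients such that (1−x)^{2ℓ+1} · Ehr(P(C_{2ℓ}),x) = H(x) as formal power series, and H is palindromic of degree exactly 2ℓ−2. -/

import Mathlib

open Polynomial PowerSeries Pointwise

/-- The graph polytope `P(G)` of a simple graph `G`:
all points with coordinates in `[0,1]` such that `x i + x j ≤ 1` for every edge `ij`. -/
def graphPolytope {V : Type*} (G : SimpleGraph V) : Set (V → ℝ) :=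
  {x | (∀ i, 0 ≤ x i ∧ x i ≤ 1) ∧ ∀ i j, G.Adj i j → x i + x j ≤ 1}

/-- `ehr P n` is the number of lattice points in the `n`-th dilate `nP` of `P`. -/
noncomputable def ehr {V : Type*} (P : Set (V → ℝ)) (n : ℕ) : ℕ :=
  Set.ncard {m : V → ℤ | (fun i => (m i : ℝ)) ∈ (n : ℝ) • P}

/-- The Ehrhart series `Ehr(P, x) = Σ_{n ≥ 0} ehr(P,n) xⁿ` as a formal power series over `ℚ`. -/
noncomputable def ehrSeries {V : Type*} (P : Set (V → ℝ)) : PowerSeries ℚ :=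
  PowerSeries.mk fun n => (ehr P n : ℚ)

/-- The circular graph on `ZMod n = {1, 2, …, n}`, with `i` adjacent to `i + 1`
(indices modulo `n`). -/
def circularGraph (n : ℕ) : SimpleGraph (ZMod n) where
  Adj x y := x ≠ y ∧ (y = x + 1 ∨ x = y + 1)
  symm := ⟨fun _ _ h => ⟨h.1.symm, h.2.symm⟩⟩
  loopless := ⟨fun _ h => h.1 rfl⟩

/-!
Colour the cycle `C_{2ℓ}` by parity and orient every edge from its even to its odd end. Reflecting
the odd coordinates, `m ↦ n - m` or `m ↦ n + 1 - m`, identifies the lattice points of `n P(C_{2ℓ})`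
both with the weakly order-preserving maps from this poset to `{0, …, n}` and, since every vertex
has a neighbour, with the strictly order-preserving maps to `{0, …, n + 1}`. Stanley's theory of
`P`-partitions counts both through the linear extensions `σ` of the poset and their descents with
respect to a labelling that puts the even vertices first, as `∑_σ C(n + 2ℓ - des σ, 2ℓ)` and as
`∑_σ C(n + 2 + des σ, 2ℓ)`. Hence `(1 - x)^{2ℓ+1} Ehr(x)` equals
both `∑_σ x^{des σ}` and `∑_σ x^{2ℓ - 2 - des σ}`. Its degree is `2ℓ - 2` because no linear
extension descends at every step, while the one sorted by the labelling has no descent at all.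
-/

open Finset

section LatticeBox

noncomputable def latticeBox (V : Type*) [Fintype V] [DecidableEq V] (M : ℤ) :
    Finset (V → ℤ) :=
  Fintype.piFinset fun _ => Icc 0 M

@[simp]
lemma mem_latticeBox {V : Type*} [Fintype V] [DecidableEq V] {M : ℤ} {g : V → ℤ} :
    g ∈ latticeBox V M ↔ ∀ v, 0 ≤ g v ∧ g v ≤ M := by
  simp only [latticeBox, Fintype.mem_piFinset, mem_Icc]

variable {d : ℕ}

lemma Monotone.mem_latticeBox_iff {f : Fin (d + 1) → ℤ} (hf : Monotone f) {M : ℤ} :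
    f ∈ latticeBox (Fin (d + 1)) M ↔ 0 ≤ f 0 ∧ f (Fin.last d) ≤ M := by
  rw [mem_latticeBox]
  exact ⟨fun h => ⟨(h 0).1, (h _).2⟩,
    fun h k => ⟨h.1.trans (hf (Fin.zero_le k)), (hf (Fin.le_last k)).trans h.2⟩⟩

theorem card_filter_strictMono_latticeBox (n N : ℕ) :
    #{v ∈ latticeBox (Fin n) N | StrictMono v} = (N + 1).choose n := by
  have hIcc : #(Icc (0 : ℤ) N) = N + 1 := by simp
  rw [← hIcc, ← card_powersetCard]
  refine card_bij (fun v _ => univ.image v) ?_ ?_ ?_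
  · intro v hv
    rw [mem_filter, mem_latticeBox] at hv
    rw [mem_powersetCard, card_image_of_injective _ hv.2.injective, card_univ, Fintype.card_fin]
    refine ⟨fun x hx => ?_, rfl⟩
    obtain ⟨k, -, rfl⟩ := mem_image.1 hx
    exact mem_Icc.2 (hv.1 k)
  · intro v hv w hw hvw
    have hrange := congrArg (fun s : Finset ℤ => (s : Set ℤ)) hvw
    simp only [coe_image, coe_univ, Set.image_univ] at hrange
    exact ((mem_filter.1 hv).2.range_inj (mem_filter.1 hw).2).1 hrange
  · intro A hA
    rw [mem_powersetCard] at hA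
    refine ⟨A.orderEmbOfFin hA.2, ?_, ?_⟩
    · rw [mem_filter, mem_latticeBox]
      exact ⟨fun k => mem_Icc.1 (hA.1 (A.orderEmbOfFin_mem hA.2 k)),
        (A.orderEmbOfFin hA.2).strictMono⟩
    · rw [← coe_inj]
      simp

end LatticeBox

section Sequences

variable {d : ℕ}

def MonotoneStrictAt (S : Finset (Fin d)) (t : Fin (d + 1) → ℤ) : Prop :=
  ∀ i, t i.castSucc ≤ t i.succ ∧ (i ∈ S → t i.castSucc < t i.succ)

instance (S : Finset (Fin d)) : DecidablePred (MonotoneStrictAt S) :=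
  fun _ => by unfold MonotoneStrictAt; infer_instance

lemma MonotoneStrictAt.monotone {S : Finset (Fin d)} {t : Fin (d + 1) → ℤ}
    (ht : MonotoneStrictAt S t) : Monotone t :=
  Fin.monotone_iff_le_succ.2 fun i => (ht i).1

lemma card_filter_castSucc_lt_succ (S : Finset (Fin d)) (i : Fin d) :
    #{j ∈ S | j.castSucc < i.succ} =
      #{j ∈ S | j.castSucc < i.castSucc} + if i ∈ S then 1 else 0 := by
  simp only [Fin.castSucc_lt_succ_iff, Fin.castSucc_lt_castSucc_iff, le_iff_lt_or_eq, filter_or]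
  rw [card_union_of_disjoint (disjoint_filter.2 fun _ _ h => h.ne), filter_eq']
  split_ifs <;> simp

/-- Adding to the `k`-th term `k` minus the number of strict steps before `k` is a bijection onto
the strictly increasing sequences in `[0, M + d - #S]`. -/
theorem card_filter_monotoneStrictAt (S : Finset (Fin d)) (M : ℕ) :
    #{t ∈ latticeBox (Fin (d + 1)) M | MonotoneStrictAt S t} =
      (M + (d + 1) - #S).choose (d + 1) := by
  have hS : #S ≤ d := by simpa using card_le_univ S
  set c : Fin (d + 1) → ℤ := fun k => #{j ∈ S | j.castSucc < k}
  have hc0 : c 0 = 0 := by simp [c]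
  have hclast : c (Fin.last d) = #S := by simp [c, Fin.castSucc_lt_last]
  have hcsucc (i : Fin d) : c i.succ = c i.castSucc + if i ∈ S then 1 else 0 := by
    simp only [c, card_filter_castSucc_lt_succ]
    push_cast
    rfl
  let shift (t : Fin (d + 1) → ℤ) : Fin (d + 1) → ℤ := fun k => t k + k - c k
  have hshift (t : Fin (d + 1) → ℤ) : MonotoneStrictAt S t ↔ StrictMono (shift t) := by
    rw [Fin.strictMono_iff_lt_succ]
    refine forall_congr' fun i => ?_
    simp only [shift, hcsucc, Fin.val_succ, Fin.val_castSucc]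
    split_ifs with h <;> simp only [h, true_imp_iff, false_imp_iff, and_true] <;> push_cast <;>
      omega
  have hmem (t : Fin (d + 1) → ℤ) :
      t ∈ {t ∈ latticeBox (Fin (d + 1)) M | MonotoneStrictAt S t} ↔
        shift t ∈ {v ∈ latticeBox (Fin (d + 1)) (M + d - #S : ℕ) | StrictMono v} := by
    simp only [mem_filter, ← hshift]
    refine and_congr_left fun ht => ?_
    rw [ht.monotone.mem_latticeBox_iff, ((hshift t).1 ht).monotone.mem_latticeBox_iff]
    simp only [shift, hc0, hclast, Fin.val_zero, Fin.val_last]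
    push_cast [Nat.cast_sub (show #S ≤ M + d by omega)]
    omega
  rw [show M + (d + 1) - #S = M + d - #S + 1 by omega, ← card_filter_strictMono_latticeBox]
  have hinv (v : Fin (d + 1) → ℤ) : shift (fun k => v k - k + c k) = v := by
    funext k
    simp only [shift]
    ring
  refine card_nbij' shift (fun v k => v k - k + c k) (fun t ht => (hmem t).1 ht)
    (fun v hv => (hmem _).2 ((hinv v).symm ▸ hv)) (fun t _ => ?_) (fun v _ => hinv v)
  funext k
  simp only [shift]
  ring

def descentSet (e : Fin (d + 1) → ℤ) : Finset (Fin d) :=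
  {i : Fin d | e i.succ < e i.castSucc}

@[simp]
lemma mem_descentSet {e : Fin (d + 1) → ℤ} {i : Fin d} :
    i ∈ descentSet e ↔ e i.succ < e i.castSucc := by
  simp [descentSet]

lemma card_descentSet_lt {e : Fin (d + 1) → ℤ} {a b : Fin (d + 1)} (hab : a < b)
    (he : e a < e b) : #(descentSet e) < d := by
  by_contra! h
  have huniv : descentSet e = univ :=
    eq_univ_of_card _ (le_antisymm (by simpa using card_le_univ (descentSet e)) (by simpa using h))
  have hanti : StrictAnti e :=
    Fin.strictAnti_iff_succ_lt.2 fun i => mem_descentSet.1 (huniv ▸ mem_univ i)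
  exact (hanti hab).not_gt he

lemma card_descentSet_neg {e : Fin (d + 1) → ℤ} (he : Function.Injective e) :
    #(descentSet (-e)) = d - #(descentSet e) := by
  have hcompl : descentSet (-e) = (descentSet e)ᶜ := by
    ext i
    have := he.ne i.castSucc_lt_succ.ne
    simp only [mem_descentSet, Pi.neg_apply, mem_compl]
    omega
  rw [hcompl, card_compl, Fintype.card_fin]

lemma strictMono_toLex_iff {t e : Fin (d + 1) → ℤ} (he : Function.Injective e) :
    StrictMono (fun k => toLex (t k, e k)) ↔ MonotoneStrictAt (descentSet e) t := by
  rw [Fin.strictMono_iff_lt_succ]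
  refine forall_congr' fun i => ?_
  have := he.ne i.castSucc_lt_succ.ne
  simp only [Prod.Lex.toLex_lt_toLex, mem_descentSet]
  omega

end Sequences

theorem existsUnique_strictMono_comp_equiv {V α : Type*} [Fintype V] [LinearOrder α] {n : ℕ}
    (hcard : Fintype.card V = n) {key : V → α} (hkey : Function.Injective key) :
    ∃! σ : Fin n ≃ V, StrictMono (key ∘ σ) := by
  let : LinearOrder V := LinearOrder.lift' key hkey
  let σ := Fintype.orderIsoFinOfCardEq V hcard
  refine ⟨σ.toEquiv, fun a b h => σ.strictMono h, fun τ hτ => Equiv.ext fun k => hkey ?_⟩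
  have hrange : Set.range (key ∘ τ) = Set.range (key ∘ σ) := by
    rw [τ.surjective.range_comp, σ.surjective.range_comp]
  exact congrFun ((hτ.range_inj fun a b h => σ.strictMono h).1 hrange) k

section PPartitions

variable {V : Type*} [Fintype V] [DecidableEq V] {d : ℕ} (R : V → V → Prop) [DecidableRel R]

def linearExtensions (n : ℕ) : Finset (Fin n ≃ V) :=
  {σ | ∀ i j, R i j → σ.symm i < σ.symm j}

variable {R}

@[simp]
lemma mem_linearExtensions {n : ℕ} {σ : Fin n ≃ V} :
    σ ∈ linearExtensions R n ↔ ∀ i j, R i j → σ.symm i < σ.symm j := by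
  simp [linearExtensions]

lemma card_descentSet_lt_of_mem_linearExtensions {ε : V → ℤ}
    (hR : ∀ i j, R i j → ε i < ε j) {i j : V} (hij : R i j) {σ : Fin (d + 1) ≃ V}
    (hσ : σ ∈ linearExtensions R (d + 1)) :
    #(descentSet (ε ∘ σ)) < d :=
  card_descentSet_lt (mem_linearExtensions.1 hσ i j hij) (by simpa using hR i j hij)

lemma exists_mem_linearExtensions_descentSet_eq_empty (hcard : Fintype.card V = d + 1)
    {ε : V → ℤ} (hε : Function.Injective ε) (hR : ∀ i j, R i j → ε i < ε j) :
    ∃ σ ∈ linearExtensions R (d + 1), descentSet (ε ∘ σ) = ∅ := by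
  obtain ⟨σ, hσ, -⟩ := existsUnique_strictMono_comp_equiv hcard hε
  refine ⟨σ, mem_linearExtensions.2 fun i j hij => hσ.lt_iff_lt.1 (by simpa using hR i j hij),
    eq_empty_of_forall_notMem fun i hi => (mem_descentSet.1 hi).not_gt (hσ i.castSucc_lt_succ)⟩

lemma card_filter_strictMono_toLex_comp {ε : V → ℤ} (hε : Function.Injective ε) (M : ℕ)
    {σ : Fin (d + 1) ≃ V} (hσ : σ ∈ linearExtensions R (d + 1)) :
    #{g ∈ latticeBox V M | (∀ i j, R i j → toLex (g i, ε i) < toLex (g j, ε j)) ∧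
        StrictMono fun k => toLex (g (σ k), ε (σ k))} =
      #{t ∈ latticeBox (Fin (d + 1)) M | MonotoneStrictAt (descentSet (ε ∘ σ)) t} := by
  have hεσ : Function.Injective (ε ∘ σ) := hε.comp σ.injective
  refine card_nbij' (· ∘ σ) (· ∘ σ.symm) (fun g hg => ?_) (fun t ht => ?_)
    (fun g _ => by simp [Function.comp_def]) (fun t _ => by simp [Function.comp_def])
  · obtain ⟨hbox, -, hsorted⟩ := by simpa only [mem_coe, mem_filter, mem_latticeBox] using hg
    simp only [mem_coe, mem_filter, mem_latticeBox]
    exact ⟨fun k => hbox (σ k), (strictMono_toLex_iff hεσ).1 hsorted⟩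
  · obtain ⟨hbox, ht⟩ := by simpa only [mem_coe, mem_filter, mem_latticeBox] using ht
    have hsorted : StrictMono fun k => toLex ((t ∘ σ.symm) (σ k), ε (σ k)) := by
      simpa using (strictMono_toLex_iff hεσ).2 ht
    simp only [mem_coe, mem_filter, mem_latticeBox]
    refine ⟨fun v => hbox (σ.symm v), fun i j hij => ?_, hsorted⟩
    simpa using hsorted (mem_linearExtensions.1 hσ i j hij)

/-- Each such `g` is sorted by exactly one `σ`, necessarily a linear extension of `R`; for fixed `σ`
the sorted `g` correspond to the sequences `g ∘ σ`, increasing strictly at the descents of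
`ε ∘ σ`. -/
theorem card_filter_toLex_eq_sum_linearExtensions (hcard : Fintype.card V = d + 1)
    {ε : V → ℤ} (hε : Function.Injective ε) (M : ℕ) :
    #{g ∈ latticeBox V M | ∀ i j, R i j → toLex (g i, ε i) < toLex (g j, ε j)} =
      ∑ σ ∈ linearExtensions R (d + 1),
        (M + (d + 1) - #(descentSet (ε ∘ σ))).choose (d + 1) := by
  classical
  set A := {g ∈ latticeBox V M | ∀ i j, R i j → toLex (g i, ε i) < toLex (g j, ε j)}
  let Sorts (g : V → ℤ) (σ : Fin (d + 1) ≃ V) : Prop :=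
    StrictMono fun k => toLex (g (σ k), ε (σ k))
  have hsort (g : V → ℤ) : ∃! σ : Fin (d + 1) ≃ V, Sorts g σ :=
    existsUnique_strictMono_comp_equiv hcard (key := fun v => toLex (g v, ε v))
      fun a b h => hε (congrArg (fun x => (ofLex x).2) h)
  have hsorted_mem (g : V → ℤ) (hg : g ∈ A) (σ : Fin (d + 1) ≃ V) (hσ : Sorts g σ) :
      σ ∈ linearExtensions R (d + 1) :=
    mem_linearExtensions.2 fun i j hij =>
      hσ.lt_iff_lt.1 (by simpa using (mem_filter.1 hg).2 i j hij)
  calc #A = ∑ g ∈ A, #{σ ∈ linearExtensions R (d + 1) | Sorts g σ} := by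
        rw [card_eq_sum_ones]
        refine sum_congr rfl fun g hg => (card_eq_one.2 ?_).symm
        obtain ⟨σ, hσ, huniq⟩ := hsort g
        refine ⟨σ, ext fun τ => ?_⟩
        rw [mem_filter, mem_singleton]
        exact ⟨fun hτ => huniq τ hτ.2, fun h => h ▸ ⟨hsorted_mem g hg σ hσ, hσ⟩⟩
    _ = ∑ σ ∈ linearExtensions R (d + 1), #{g ∈ A | Sorts g σ} :=
        sum_card_bipartiteAbove_eq_sum_card_bipartiteBelow _
    _ = _ := by
        refine sum_congr rfl fun σ hσ => ?_
        rw [← card_filter_monotoneStrictAt, ← card_filter_strictMono_toLex_comp hε M hσ,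
          filter_filter]

theorem card_filter_monotone_eq_sum_linearExtensions (hcard : Fintype.card V = d + 1)
    {ε : V → ℤ} (hε : Function.Injective ε) (hR : ∀ i j, R i j → ε i < ε j) (M : ℕ) :
    #{g ∈ latticeBox V M | ∀ i j, R i j → g i ≤ g j} =
      ∑ σ ∈ linearExtensions R (d + 1),
        (M + (d + 1) - #(descentSet (ε ∘ σ))).choose (d + 1) := by
  rw [← card_filter_toLex_eq_sum_linearExtensions hcard hε]
  refine congrArg card <| filter_congr fun g _ =>
    forall₂_congr fun i j => forall_congr' fun hij => ?_
  have := hR i j hij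
  simp only [Prod.Lex.toLex_lt_toLex]
  omega

theorem card_filter_strictMono_eq_sum_linearExtensions (hcard : Fintype.card V = d + 1)
    {ε : V → ℤ} (hε : Function.Injective ε) (hR : ∀ i j, R i j → ε i < ε j) (M : ℕ) :
    #{g ∈ latticeBox V M | ∀ i j, R i j → g i < g j} =
      ∑ σ ∈ linearExtensions R (d + 1),
        (M + 1 + #(descentSet (ε ∘ σ))).choose (d + 1) := by
  calc _ = #{g ∈ latticeBox V M |
          ∀ i j, R i j → toLex (g i, -ε i) < toLex (g j, -ε j)} := by
        refine congrArg card <| filter_congr fun g _ =>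
          forall₂_congr fun i j => forall_congr' fun hij => ?_
        have := hR i j hij
        simp only [Prod.Lex.toLex_lt_toLex]
        omega
    _ = ∑ σ ∈ linearExtensions R (d + 1),
          (M + (d + 1) - #(descentSet (-(ε ∘ σ)))).choose (d + 1) :=
        card_filter_toLex_eq_sum_linearExtensions hcard (neg_injective.comp hε) M
    _ = _ := by
        refine sum_congr rfl fun σ _ => ?_
        have hle : #(descentSet (ε ∘ σ)) ≤ d := by
          simpa using card_le_univ (descentSet (ε ∘ σ))
        rw [card_descentSet_neg (hε.comp σ.injective)]
        congr 1
        omega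

end PPartitions

theorem PowerSeries.one_sub_X_pow_mul_mk_sum_choose {S ι : Type*} [CommRing S] (s : Finset ι)
    (k : ι → ℕ) {D : ℕ} (hD : 0 < D) :
    ((1 - PowerSeries.X) ^ (D + 1) : S⟦X⟧) *
        mk (fun n => ∑ i ∈ s, ((n + D - k i).choose D : S)) =
      ((∑ i ∈ s, Polynomial.X ^ k i : S[X]) : S⟦X⟧) := by
  have hmk : mk (fun n => ∑ i ∈ s, ((n + D - k i).choose D : S)) =
      ((∑ i ∈ s, Polynomial.X ^ k i : S[X]) : S⟦X⟧) * (invOneSubPow S (D + 1)).val := by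
    ext n
    rw [← Polynomial.coeToPowerSeries.ringHom_apply, map_sum]
    simp only [map_pow, Polynomial.coeToPowerSeries.ringHom_apply, Polynomial.coe_X, sum_mul,
      map_sum, coeff_X_pow_mul', coeff_mk, invOneSubPow_val_succ_eq_mk_add_choose]
    refine sum_congr rfl fun i _ => ?_
    split_ifs with h
    · rw [show n + D - k i = D + (n - k i) by omega]
    · rw [Nat.choose_eq_zero_of_lt (by omega), Nat.cast_zero]
  rw [hmk, mul_left_comm, ← invOneSubPow_inv_eq_one_sub_pow, Units.inv_val, mul_one]

lemma Polynomial.coeff_sum_X_pow {R ι : Type*} [Semiring R] (s : Finset ι) (k : ι → ℕ)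
    (n : ℕ) :
    (∑ i ∈ s, Polynomial.X ^ k i : R[X]).coeff n = #{i ∈ s | k i = n} := by
  simp [Polynomial.coeff_X_pow, sum_boole, eq_comm]

lemma Polynomial.coeff_sum_X_pow_eq_coeff_sub {R ι : Type*} [Semiring R] {s : Finset ι}
    {k : ι → ℕ} {N : ℕ} (hk : ∀ i ∈ s, k i ≤ N)
    (h : (∑ i ∈ s, Polynomial.X ^ k i : R[X]) = ∑ i ∈ s, Polynomial.X ^ (N - k i)) {n : ℕ}
    (hn : n ≤ N) :
    (∑ i ∈ s, Polynomial.X ^ k i : R[X]).coeff n =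
      (∑ i ∈ s, Polynomial.X ^ k i : R[X]).coeff (N - n) := by
  conv_lhs => rw [h]
  simp only [Polynomial.coeff_sum_X_pow]
  congr 2
  exact filter_congr fun i hi => by have := hk i hi; omega

lemma Polynomial.natDegree_sum_X_pow_eq {R ι : Type*} [Semiring R] [CharZero R] {s : Finset ι}
    {k : ι → ℕ} {N : ℕ} (hk : ∀ i ∈ s, k i ≤ N)
    (h : (∑ i ∈ s, Polynomial.X ^ k i : R[X]) = ∑ i ∈ s, Polynomial.X ^ (N - k i))
    (h0 : ∃ i ∈ s, k i = 0) :
    (∑ i ∈ s, Polynomial.X ^ k i : R[X]).natDegree = N := by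
  refine Polynomial.natDegree_eq_of_le_of_coeff_ne_zero
    (Polynomial.natDegree_sum_le_of_forall_le _ _ fun i hi =>
      (Polynomial.natDegree_X_pow_le _).trans (hk i hi)) ?_
  obtain ⟨i, hi, hi0⟩ := h0
  rw [← Nat.sub_zero N, ← Polynomial.coeff_sum_X_pow_eq_coeff_sub hk h (Nat.zero_le N),
    Polynomial.coeff_sum_X_pow]
  exact_mod_cast (card_pos.2 ⟨i, mem_filter.2 ⟨hi, hi0⟩⟩).ne'

section GraphPolytope

variable {V : Type*} (G : SimpleGraph V)

lemma mem_smul_graphPolytope {c : ℝ} (hc : 0 ≤ c) {x : V → ℝ} :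
    x ∈ c • graphPolytope G ↔
      (∀ i, 0 ≤ x i ∧ x i ≤ c) ∧ ∀ i j, G.Adj i j → x i + x j ≤ c := by
  rcases hc.eq_or_lt with rfl | hc
  · rw [Set.zero_smul_set ⟨0, by simp [graphPolytope]⟩, Set.mem_zero]
    refine ⟨by rintro rfl; simp, fun ⟨h, _⟩ => funext fun i => le_antisymm (h i).2 (h i).1⟩
  · rw [Set.mem_smul_set_iff_inv_smul_mem₀ hc.ne']
    simp only [graphPolytope, Set.mem_ofPred_eq, Pi.smul_apply, smul_eq_mul, ← mul_add,
      inv_mul_le_one₀ hc, mul_nonneg_iff_of_pos_left (inv_pos.2 hc)]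

lemma ehr_graphPolytope [Fintype V] [DecidableEq V] [DecidableRel G.Adj] (n : ℕ) :
    ehr (graphPolytope G) n =
      #{m ∈ latticeBox V n | ∀ i j, G.Adj i j → m i + m j ≤ (n : ℤ)} := by
  unfold ehr
  rw [← Set.ncard_coe_finset]
  congr 1
  ext m
  simp only [coe_filter, mem_latticeBox, Set.mem_ofPred_eq,
    mem_smul_graphPolytope G (Nat.cast_nonneg n)]
  norm_cast

end GraphPolytope

section Bipartite

variable {V : Type*}

lemma exists_injective_lt_of_not [Fintype V] (p : V → Prop) [DecidablePred p] :
    ∃ ε : V → ℤ, Function.Injective ε ∧ ∀ i j, p i → ¬ p j → ε i < ε j := by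
  let e := Fintype.equivFin V
  refine ⟨fun v => (if p v then 0 else Fintype.card V) + e v, fun a b h => ?_,
    fun i j hi hj => ?_⟩
  · have ha := (e a).2
    have hb := (e b).2
    refine e.injective (Fin.ext ?_)
    simp only at h
    split_ifs at h <;> push_cast at h <;> omega
  · have := (e i).2
    simp only [if_pos hi, if_neg hj]
    omega

def flipOutside (p : V → Prop) [DecidablePred p] (c : ℤ) (m : V → ℤ) : V → ℤ :=
  fun v => if p v then m v else c - m v

lemma flipOutside_involutive (p : V → Prop) [DecidablePred p] (c : ℤ) :
    Function.Involutive (flipOutside p c) := by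
  intro m
  funext v
  unfold flipOutside
  split_ifs <;> ring

variable {G : SimpleGraph V} {p : V → Prop}

lemma forall_adj_iff_of_bipartite (hp : ∀ i j, G.Adj i j → (p i ↔ ¬ p j))
    {φ : V → V → Prop} (hφ : ∀ i j, φ i j → φ j i) :
    (∀ i j, G.Adj i j → φ i j) ↔ ∀ i j, G.Adj i j ∧ p i → φ i j := by
  refine ⟨fun h i j hij => h i j hij.1, fun h i j hij => ?_⟩
  by_cases hi : p i
  · exact h i j ⟨hij, hi⟩
  · exact hφ j i (h j i ⟨hij.symm, (hp j i hij.symm).2 hi⟩)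

lemma exists_adj_and_of_bipartite [Nonempty V] (hp : ∀ i j, G.Adj i j → (p i ↔ ¬ p j))
    (hG : ∀ v, ∃ w, G.Adj v w) : ∃ i j, G.Adj i j ∧ p i := by
  obtain ⟨v⟩ := ‹Nonempty V›
  obtain ⟨w, hvw⟩ := hG v
  by_cases hpv : p v
  · exact ⟨v, w, hvw, hpv⟩
  · exact ⟨w, v, hvw.symm, (hp w v hvw.symm).2 hpv⟩

variable [Fintype V] [DecidableEq V] [DecidableRel G.Adj] [DecidablePred p]

theorem card_graphPolytope_points_eq_card_monotone (hp : ∀ i j, G.Adj i j → (p i ↔ ¬ p j))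
    (n : ℕ) :
    #{m ∈ latticeBox V n | ∀ i j, G.Adj i j → m i + m j ≤ (n : ℤ)} =
      #{g ∈ latticeBox V n | ∀ i j, G.Adj i j ∧ p i → g i ≤ g j} := by
  refine card_equiv (flipOutside_involutive p n).toPerm fun m => ?_
  simp only [mem_filter, mem_latticeBox, Function.Involutive.coe_toPerm,
    forall_adj_iff_of_bipartite hp fun i j (h : m i + m j ≤ n) => by omega]
  refine and_congr (forall_congr' fun v => ?_)
    (forall₂_congr fun i j => forall_congr' fun hij => ?_)
  · unfold flipOutside
    split_ifs <;> omega
  · have hj := (hp i j hij.1).1 hij.2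
    simp only [flipOutside, if_pos hij.2, if_neg hj]
    omega

theorem card_graphPolytope_points_eq_card_strictMono (hp : ∀ i j, G.Adj i j → (p i ↔ ¬ p j))
    (hG : ∀ v, ∃ w, G.Adj v w) (n : ℕ) :
    #{m ∈ latticeBox V n | ∀ i j, G.Adj i j → m i + m j ≤ (n : ℤ)} =
      #{g ∈ latticeBox V (n + 1 : ℕ) | ∀ i j, G.Adj i j ∧ p i → g i < g j} := by
  refine card_equiv (flipOutside_involutive p (n + 1)).toPerm fun m => ?_
  simp only [mem_filter, mem_latticeBox, Function.Involutive.coe_toPerm,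
    forall_adj_iff_of_bipartite hp fun i j (h : m i + m j ≤ n) => by omega]
  have hedge : (∀ i j, G.Adj i j ∧ p i → m i + m j ≤ n) ↔
      ∀ i j, G.Adj i j ∧ p i → flipOutside p (n + 1) m i < flipOutside p (n + 1) m j := by
    refine forall₂_congr fun i j => forall_congr' fun hij => ?_
    have hj := (hp i j hij.1).1 hij.2
    simp only [flipOutside, if_pos hij.2, if_neg hj]
    omega
  rw [hedge]
  refine ⟨fun ⟨hbox, hR⟩ => ⟨fun v => ?_, hR⟩,
    fun ⟨hbox, hR⟩ => ⟨fun v => ?_, hR⟩⟩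
  · have := hbox v
    unfold flipOutside
    split_ifs <;> push_cast <;> omega
  · obtain ⟨w, hvw⟩ := hG v
    have hv := hbox v
    have hw := hbox w
    unfold flipOutside at hv hw hR
    by_cases hpv : p v
    · have := hR v w ⟨hvw, hpv⟩
      simp only [if_pos hpv, if_neg ((hp v w hvw).1 hpv)] at hv this
      push_cast at hw
      omega
    · have hpw := (hp w v hvw.symm).2 hpv
      have := hR w v ⟨hvw.symm, hpw⟩
      simp only [if_neg hpv, if_pos hpw] at hv this
      push_cast at hv
      omega

theorem ehr_graphPolytope_eq_sum_descents {d : ℕ} (hcard : Fintype.card V = d + 1)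
    (hp : ∀ i j, G.Adj i j → (p i ↔ ¬ p j)) {ε : V → ℤ} (hε : Function.Injective ε)
    (hR : ∀ i j, G.Adj i j ∧ p i → ε i < ε j) (n : ℕ) :
    ehr (graphPolytope G) n = ∑ σ ∈ linearExtensions (fun i j => G.Adj i j ∧ p i) (d + 1),
      (n + (d + 1) - #(descentSet (ε ∘ σ))).choose (d + 1) := by
  rw [ehr_graphPolytope, card_graphPolytope_points_eq_card_monotone hp,
    card_filter_monotone_eq_sum_linearExtensions hcard hε hR]

theorem ehr_graphPolytope_eq_sum_ascents {d : ℕ} (hcard : Fintype.card V = d + 1)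
    (hp : ∀ i j, G.Adj i j → (p i ↔ ¬ p j)) (hG : ∀ v, ∃ w, G.Adj v w) {ε : V → ℤ}
    (hε : Function.Injective ε) (hR : ∀ i j, G.Adj i j ∧ p i → ε i < ε j) (n : ℕ) :
    ehr (graphPolytope G) n = ∑ σ ∈ linearExtensions (fun i j => G.Adj i j ∧ p i) (d + 1),
      (n + 2 + #(descentSet (ε ∘ σ))).choose (d + 1) := by
  rw [ehr_graphPolytope, card_graphPolytope_points_eq_card_strictMono hp hG,
    card_filter_strictMono_eq_sum_linearExtensions hcard hε hR]

end Bipartite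

theorem exists_palindromic_numerator_ehrSeries_graphPolytope {V : Type*} [Fintype V]
    {G : SimpleGraph V} {p : V → Prop} {d : ℕ} (hcard : Fintype.card V = d + 1)
    (hp : ∀ i j, G.Adj i j → (p i ↔ ¬ p j)) (hG : ∀ v, ∃ w, G.Adj v w) :
    ∃ H : Polynomial ℚ,
      ((1 - PowerSeries.X) ^ (d + 2) : PowerSeries ℚ) * ehrSeries (graphPolytope G) =
          (H : PowerSeries ℚ) ∧
        H.natDegree = d - 1 ∧ ∀ i ≤ d - 1, H.coeff i = H.coeff (d - 1 - i) := by
  classical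
  have : Nonempty V := Fintype.card_pos_iff.1 (by omega)
  obtain ⟨ε, hε, hεp⟩ := exists_injective_lt_of_not p
  have hR : ∀ i j, G.Adj i j ∧ p i → ε i < ε j := fun i j h => hεp i j h.2 ((hp i j h.1).1 h.2)
  obtain ⟨i₀, j₀, hij₀⟩ := exists_adj_and_of_bipartite hp hG
  set L := linearExtensions (fun i j => G.Adj i j ∧ p i) (d + 1)
  have hdes : ∀ σ ∈ L, #(descentSet (ε ∘ σ)) < d := fun σ hσ =>
    card_descentSet_lt_of_mem_linearExtensions hR hij₀ hσ
  have hdes' : ∀ σ ∈ L, #(descentSet (ε ∘ σ)) ≤ d - 1 := fun σ hσ =>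
    Nat.le_sub_one_of_lt (hdes σ hσ)
  have hweak : ((1 - PowerSeries.X) ^ (d + 2) : ℚ⟦X⟧) * ehrSeries (graphPolytope G) =
      ((∑ σ ∈ L, Polynomial.X ^ #(descentSet (ε ∘ σ)) : ℚ[X]) : ℚ⟦X⟧) := by
    rw [← one_sub_X_pow_mul_mk_sum_choose (D := d + 1) _ _ d.succ_pos]
    congr 1
    ext n
    rw [ehrSeries, coeff_mk, coeff_mk, ehr_graphPolytope_eq_sum_descents hcard hp hε hR,
      Nat.cast_sum]
  have hstrict : ((1 - PowerSeries.X) ^ (d + 2) : ℚ⟦X⟧) * ehrSeries (graphPolytope G) =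
      ((∑ σ ∈ L, Polynomial.X ^ (d - 1 - #(descentSet (ε ∘ σ))) : ℚ[X]) : ℚ⟦X⟧) := by
    rw [← one_sub_X_pow_mul_mk_sum_choose (D := d + 1) _ _ d.succ_pos]
    congr 1
    ext n
    rw [ehrSeries, coeff_mk, coeff_mk, ehr_graphPolytope_eq_sum_ascents hcard hp hG hε hR,
      Nat.cast_sum]
    refine sum_congr rfl fun σ hσ => ?_
    have := hdes σ hσ
    congr 2
    omega
  have hsymm := Polynomial.coe_inj.1 (hweak.symm.trans hstrict)
  obtain ⟨σ₀, hσ₀, hσ₀des⟩ := exists_mem_linearExtensions_descentSet_eq_empty hcard hε hR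
  exact ⟨_, hweak,
    Polynomial.natDegree_sum_X_pow_eq hdes' hsymm ⟨σ₀, hσ₀, by rw [hσ₀des, card_empty]⟩,
    fun i hi => Polynomial.coeff_sum_X_pow_eq_coeff_sub hdes' hsymm hi⟩

section CircularGraph

variable {ℓ : ℕ} [NeZero ℓ]

lemma even_val_add_one_iff (i : ZMod (2 * ℓ)) : Even (i + 1).val ↔ ¬ Even i.val := by
  have h1 : (1 : ZMod (2 * ℓ)).val = 1 := by
    rw [ZMod.val_one_eq_one_mod]
    exact Nat.mod_eq_of_lt (by have := NeZero.pos ℓ; omega)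
  rw [ZMod.val_add, h1, Nat.even_iff, Nat.even_iff, Nat.mod_mod_of_dvd _ (dvd_mul_right 2 ℓ)]
  omega

lemma circularGraph_adj_even_iff {i j : ZMod (2 * ℓ)} (h : (circularGraph (2 * ℓ)).Adj i j) :
    Even i.val ↔ ¬ Even j.val := by
  rcases h.2 with rfl | rfl
  · rw [even_val_add_one_iff]
    tauto
  · exact even_val_add_one_iff j

lemma circularGraph_exists_adj (i : ZMod (2 * ℓ)) : ∃ j, (circularGraph (2 * ℓ)).Adj i j := by
  refine ⟨i + 1, fun h => ?_, Or.inl rfl⟩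
  have := even_val_add_one_iff i
  rw [← h] at this
  tauto

end CircularGraph

theorem stmt11 (ℓ : ℕ) (hℓ : 2 ≤ ℓ) :
    ∃ H : Polynomial ℚ,
      ((1 - PowerSeries.X) ^ (2 * ℓ + 1) : PowerSeries ℚ) *
          ehrSeries (graphPolytope (circularGraph (2 * ℓ))) = (H : PowerSeries ℚ) ∧
        H.natDegree = 2 * ℓ - 2 ∧
        ∀ i ≤ 2 * ℓ - 2, H.coeff i = H.coeff (2 * ℓ - 2 - i) := by
  have : NeZero ℓ := ⟨by omega⟩
  have hcard : Fintype.card (ZMod (2 * ℓ)) = 2 * ℓ - 1 + 1 := by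
    rw [ZMod.card]
    omega
  obtain ⟨H, hH, hdeg, hpal⟩ := exists_palindromic_numerator_ehrSeries_graphPolytope hcard
    (fun _ _ => circularGraph_adj_even_iff) circularGraph_exists_adj
  rw [show 2 * ℓ - 1 + 2 = 2 * ℓ + 1 by omega] at hH
  rw [show 2 * ℓ - 1 - 1 = 2 * ℓ - 2 by omega] at hdeg hpal
  exact ⟨H, hH, hdeg, hpal⟩
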